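/- Fix d ≥ 1, γ ≥ 1, t ∈ ℕ, and subsets A_1, …, A_t ⊆ {1,…,d}. For τ ∈ {1,…,t} and i ∈ {1,…,d} let n_{τ,i} = #{σ < τ : i ∈ A_σ}. Then Σ_{τ=1}^t Σ_{i∈A_τ} 1/(n_{τ,i} + γ) ≤ 2 d log( 1 + t/γ ). -/
import Mathlib


open Finset

/-- `n_{τ,i} = #{σ < τ : i ∈ A_σ}` (rounds are indexed from 1). -/
def nPulls {d : ℕ} (A : ℕ → Finset (Fin d)) (τ : ℕ) (i : Fin d) : ℕ :=
  ((Finset.Ico 1 τ).filter fun σ => i ∈ A σ).card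

lemma le_two_log (y : ℝ) (h0 : 0 < y) (h1 : y ≤ 1) : y ≤ 2 * Real.log (1 + y) := by
  have hpos : (0:ℝ) < 1 + y := by linarith
  have h := Real.log_le_sub_one_of_pos (show (0:ℝ) < (1+y)⁻¹ by positivity)
  rw [Real.log_inv] at h
  have hinv : (1+y) * (1+y)⁻¹ = 1 := mul_inv_cancel₀ (ne_of_gt hpos)
  nlinarith [h, hinv, mul_nonneg h0.le (show (0:ℝ) ≤ 1 - y by linarith),
    mul_pos h0 hpos]

lemma inv_le_two_log (γ : ℝ) (hγ : 1 ≤ γ) (n : ℕ) :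
    1 / ((n:ℝ) + γ) ≤ 2 * (Real.log ((n:ℝ) + 1 + γ) - Real.log ((n:ℝ) + γ)) := by
  have hn : (0:ℝ) ≤ n := Nat.cast_nonneg n
  have hx : (1:ℝ) ≤ (n:ℝ) + γ := by linarith
  have hx0 : (0:ℝ) < (n:ℝ) + γ := by linarith
  have hy0 : 0 < 1 / ((n:ℝ) + γ) := by positivity
  have hy1 : 1 / ((n:ℝ) + γ) ≤ 1 := by
    rw [div_le_one hx0]; linarith
  have h := le_two_log _ hy0 hy1
  have hlog : Real.log ((n:ℝ) + 1 + γ) - Real.log ((n:ℝ) + γ)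
      = Real.log (1 + 1 / ((n:ℝ) + γ)) := by
    rw [← Real.log_div (by linarith) (ne_of_gt hx0)]
    congr 1
    field_simp
    ring
  rw [hlog]
  exact h

lemma range_sum_le (γ : ℝ) (hγ : 1 ≤ γ) (m : ℕ) :
    ∑ k ∈ Finset.range m, 1 / ((k:ℝ) + γ) ≤
      2 * (Real.log ((m:ℝ) + γ) - Real.log γ) := by
  induction m with
  | zero => simp
  | succ n ih =>
    rw [Finset.sum_range_succ]
    have h := inv_le_two_log γ hγ n
    push_cast
    linarith

/-- Lemma 12 of the paper (sum of squared confidence widths): for `γ ≥ 1`,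
`Σ_{τ=1}^t Σ_{i∈A_τ} 1/(n_{τ,i} + γ) ≤ 2 d log(1 + t/γ)`. -/
theorem sum_squared_widths_le
    {d : ℕ} (hd : 1 ≤ d) (γ : ℝ) (hγ : 1 ≤ γ) (t : ℕ) (A : ℕ → Finset (Fin d)) :
    ∑ τ ∈ Finset.Icc 1 t, ∑ i ∈ A τ, 1 / ((nPulls A τ i : ℝ) + γ) ≤
      2 * d * Real.log (1 + t / γ) := by
  have hγ0 : (0:ℝ) < γ := lt_of_lt_of_le one_pos hγ
  -- swap the sums
  have hswap : ∑ τ ∈ Finset.Icc 1 t, ∑ i ∈ A τ, 1 / ((nPulls A τ i : ℝ) + γ)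
      = ∑ i : Fin d, ∑ τ ∈ (Finset.Icc 1 t).filter (fun τ => i ∈ A τ),
          1 / ((nPulls A τ i : ℝ) + γ) := by
    have h1 : ∀ τ ∈ Finset.Icc 1 t,
        ∑ i ∈ A τ, 1 / ((nPulls A τ i : ℝ) + γ)
          = ∑ i : Fin d, if i ∈ A τ then 1 / ((nPulls A τ i : ℝ) + γ) else 0 := by
      intro τ _
      rw [Finset.sum_ite_mem, Finset.univ_inter]
    rw [Finset.sum_congr rfl h1, Finset.sum_comm]
    refine Finset.sum_congr rfl fun i _ => ?_
    rw [Finset.sum_filter]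
  rw [hswap]
  have key : ∀ i : Fin d,
      ∑ τ ∈ (Finset.Icc 1 t).filter (fun τ => i ∈ A τ), 1 / ((nPulls A τ i : ℝ) + γ)
        ≤ 2 * Real.log (1 + t / γ) := by
    intro i
    set S := (Finset.Icc 1 t).filter (fun τ => i ∈ A τ) with hS
    set m := S.card with hm
    -- strict monotonicity of nPulls on S
    have hmono : ∀ τ ∈ S, ∀ τ' ∈ S, τ < τ' → nPulls A τ i < nPulls A τ' i := by
      intro τ hτ τ' hτ' hlt
      simp only [hS, Finset.mem_filter, Finset.mem_Icc] at hτ hτ'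
      have hsub : insert τ ((Finset.Ico 1 τ).filter fun σ => i ∈ A σ)
          ⊆ (Finset.Ico 1 τ').filter fun σ => i ∈ A σ := by
        intro σ hσ
        rcases Finset.mem_insert.mp hσ with rfl | hσ
        · exact Finset.mem_filter.mpr ⟨Finset.mem_Ico.mpr ⟨hτ.1.1, hlt⟩, hτ.2⟩
        · simp only [Finset.mem_filter, Finset.mem_Ico] at hσ ⊢
          exact ⟨⟨hσ.1.1, hσ.1.2.trans hlt⟩, hσ.2⟩
      have hnotmem : τ ∉ (Finset.Ico 1 τ).filter fun σ => i ∈ A σ := by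
        simp [Finset.mem_Ico]
      have := Finset.card_le_card hsub
      rw [Finset.card_insert_of_notMem hnotmem] at this
      simpa [nPulls] using this
    have hinj : ∀ a ∈ S, ∀ b ∈ S, nPulls A a i = nPulls A b i → a = b := by
      intro a ha b hb hab
      by_contra hne
      rcases lt_or_gt_of_ne hne with h | h
      · exact absurd hab (ne_of_lt (hmono a ha b hb h))
      · exact absurd hab.symm (ne_of_lt (hmono b hb a ha h))
    have hlt : ∀ τ ∈ S, nPulls A τ i < m := by
      intro τ hτ
      have hτ' := hτ
      simp only [hS, Finset.mem_filter, Finset.mem_Icc] at hτ'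
      have hsub : ((Finset.Ico 1 τ).filter fun σ => i ∈ A σ) ⊂ S := by
        refine Finset.ssubset_iff_of_subset ?_ |>.mpr ⟨τ, hτ, ?_⟩
        · intro σ hσ
          simp only [Finset.mem_filter, Finset.mem_Ico] at hσ
          simp only [hS, Finset.mem_filter, Finset.mem_Icc]
          exact ⟨⟨hσ.1.1, le_trans (le_of_lt hσ.1.2) hτ'.1.2⟩, hσ.2⟩
        · simp [Finset.mem_Ico]
      exact Finset.card_lt_card hsub
    have h1 : ∑ τ ∈ S, 1 / ((nPulls A τ i : ℝ) + γ)
        = ∑ k ∈ S.image (fun τ => nPulls A τ i), 1 / ((k:ℝ) + γ) := by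
      rw [Finset.sum_image hinj]
    have h2 : S.image (fun τ => nPulls A τ i) ⊆ Finset.range m := by
      intro k hk
      rcases Finset.mem_image.mp hk with ⟨τ, hτ, rfl⟩
      exact Finset.mem_range.mpr (hlt τ hτ)
    have h3 : ∑ k ∈ S.image (fun τ => nPulls A τ i), 1 / ((k:ℝ) + γ)
        ≤ ∑ k ∈ Finset.range m, 1 / ((k:ℝ) + γ) :=
      Finset.sum_le_sum_of_subset_of_nonneg h2 (by intro k _ _; positivity)
    have h4 := range_sum_le γ hγ m
    have hmt : m ≤ t := by
      have := Finset.card_le_card (Finset.filter_subset (fun τ => i ∈ A τ) (Finset.Icc 1 t))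
      simpa [Nat.card_Icc] using this
    have h5 : Real.log ((m:ℝ) + γ) - Real.log γ = Real.log (1 + m / γ) := by
      rw [← Real.log_div (by positivity) (ne_of_gt hγ0)]
      congr 1
      field_simp
      ring
    have h6 : Real.log (1 + (m:ℝ) / γ) ≤ Real.log (1 + (t:ℝ) / γ) := by
      apply Real.log_le_log (by positivity)
      have : (m:ℝ) ≤ t := Nat.cast_le.mpr hmt
      have h7 : (m:ℝ) / γ ≤ (t:ℝ) / γ := by gcongr
      linarith
    calc ∑ τ ∈ S, 1 / ((nPulls A τ i : ℝ) + γ)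
        ≤ ∑ k ∈ Finset.range m, 1 / ((k:ℝ) + γ) := by rw [h1]; exact h3
      _ ≤ 2 * (Real.log ((m:ℝ) + γ) - Real.log γ) := h4
      _ = 2 * Real.log (1 + (m:ℝ) / γ) := by rw [h5]
      _ ≤ 2 * Real.log (1 + (t:ℝ) / γ) := by linarith
  calc ∑ i : Fin d, ∑ τ ∈ (Finset.Icc 1 t).filter (fun τ => i ∈ A τ),
        1 / ((nPulls A τ i : ℝ) + γ)
      ≤ ∑ _i : Fin d, 2 * Real.log (1 + t / γ) :=
        Finset.sum_le_sum fun i _ => key i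
    _ = 2 * d * Real.log (1 + t / γ) := by
        rw [Finset.sum_const, Finset.card_univ, Fintype.card_fin, nsmul_eq_mul]
        ring
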